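/- For k ∈ ℕ let S = {0, 1} ∪ {2^(2^i) : 1 ≤ i ≤ k−1} and a = 2^(2^k), and define W : ℝ → ℝ by W(t) = (1/(g_S(t)·t^{2a}))·((2a·t^{2a−1}·g_S(t) − (deriv g_S t)·t^{2a})/(g_S(t) + t^{2a}))². Then there exists a real constant c > 0 and K ∈ ℕ such that for all k ≥ K, ∫_{1−1/(2a)}^{1} √(W(t)) dt ≥ c/√k. -/

import Mathlib

open Real Finset

/-- `g_S(t) = ∑_{e ∈ S} t^(2e)`. -/
noncomputable def gS (S : Finset ℕ) (t : ℝ) : ℝ := ∑ e ∈ S, t ^ (2 * e)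

/-- `h_S(t) = ∑_{e ∈ S} e² t^(2e-2)` (the term for `e = 0` being `0`). -/
noncomputable def hS (S : Finset ℕ) (t : ℝ) : ℝ := ∑ e ∈ S, (e : ℝ) ^ 2 * t ^ (2 * e - 2)

/-- `q_S(t) = ∑_{e ∈ S} e t^(2e-1)` (the term for `e = 0` being `0`). -/
noncomputable def qS (S : Finset ℕ) (t : ℝ) : ℝ := ∑ e ∈ S, (e : ℝ) * t ^ (2 * e - 1)

/-- `E_S(t) = g_S(t) h_S(t) - q_S(t)²`. -/
noncomputable def ES (S : Finset ℕ) (t : ℝ) : ℝ := gS S t * hS S t - qS S t ^ 2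

/-- The expected number of real zeros in `(0,1)`, given by the Edelman–Kostlan integral. -/
noncomputable def zS (S : Finset ℕ) : ℝ :=
  (1 / Real.pi) * ∫ t in (0 : ℝ)..1, Real.sqrt (ES S t) / gS S t

/-- The set `S = {0,1} ∪ {2^(2^i) : 1 ≤ i ≤ k-1}`. -/
def lbSet (k : ℕ) : Finset ℕ := {0, 1} ∪ (Finset.Icc 1 (k - 1)).image (fun i => 2 ^ (2 ^ i))

/-- The function `W` from Lemma on the lower bound, with `a = 2^(2^k)`. -/
noncomputable def Wfun (k : ℕ) (t : ℝ) : ℝ :=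
  (1 / (gS (lbSet k) t * t ^ (2 * 2 ^ 2 ^ k))) *
    ((2 * (2 ^ 2 ^ k : ℕ) * t ^ (2 * 2 ^ 2 ^ k - 1) * gS (lbSet k) t
        - deriv (gS (lbSet k)) t * t ^ (2 * 2 ^ 2 ^ k)) /
      (gS (lbSet k) t + t ^ (2 * 2 ^ 2 ^ k))) ^ 2

/-! On `[1 - 1/(2a), 1]` Bernoulli's inequality gives `t^(2a) ≥ 1/4`, while `1 ≤ g_S ≤ |S| ≤ k + 1`
and `g_S' ≤ 2 |S| max S ≤ 2 (k + 1) √a`. As `8 (k + 1) √a ≤ a` once `k ≥ 4`, the numerator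
`2a t^(2a-1) g_S - g_S' t^(2a)` is at least `a g_S / 4`, so `W ≥ a² / (64 (k + 1))`. Integrating
`√W ≥ a / (8 √(k + 1))` over an interval of length `1/(2a)` gives `1 / (16 √(k + 1)) ≥ 1 / (32 √k)`. -/

section gS

variable (S : Finset ℕ) {t : ℝ}

lemma one_le_gS (h0 : 0 ∈ S) (ht : 0 ≤ t) : 1 ≤ gS S t := by
  calc (1 : ℝ) = t ^ (2 * 0) := by simp
    _ ≤ gS S t := single_le_sum (f := fun e => t ^ (2 * e)) (fun e _ => pow_nonneg ht _) h0

lemma gS_le_card (ht₀ : 0 ≤ t) (ht₁ : t ≤ 1) : gS S t ≤ #S := by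
  simpa [gS] using sum_le_sum fun e (_ : e ∈ S) => pow_le_one₀ (n := 2 * e) ht₀ ht₁

lemma hasDerivAt_gS (t : ℝ) :
    HasDerivAt (gS S) (∑ e ∈ S, ((2 * e : ℕ) : ℝ) * t ^ (2 * e - 1)) t :=
  HasDerivAt.fun_sum fun e _ => hasDerivAt_pow (2 * e) t

lemma deriv_gS : deriv (gS S) = fun t => ∑ e ∈ S, ((2 * e : ℕ) : ℝ) * t ^ (2 * e - 1) :=
  funext fun t => (hasDerivAt_gS S t).deriv

@[fun_prop]
lemma continuous_gS : Continuous (gS S) := by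
  unfold gS; fun_prop

@[fun_prop]
lemma continuous_deriv_gS : Continuous (deriv (gS S)) := by
  rw [deriv_gS]; fun_prop

lemma deriv_gS_nonneg (ht : 0 ≤ t) : 0 ≤ deriv (gS S) t := by
  rw [deriv_gS]
  exact sum_nonneg fun e _ => by positivity

lemma deriv_gS_le {b : ℕ} (hb : ∀ e ∈ S, e ≤ b) (ht₀ : 0 ≤ t) (ht₁ : t ≤ 1) :
    deriv (gS S) t ≤ #S * (2 * b) := by
  rw [deriv_gS]
  calc ∑ e ∈ S, ((2 * e : ℕ) : ℝ) * t ^ (2 * e - 1)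
      ≤ ∑ _e ∈ S, (2 * b : ℝ) := by
        refine sum_le_sum fun e he => ?_
        have : ((2 * e : ℕ) : ℝ) ≤ 2 * b := by exact_mod_cast Nat.mul_le_mul_left 2 (hb e he)
        nlinarith [pow_le_one₀ (n := 2 * e - 1) ht₀ ht₁, pow_nonneg ht₀ (2 * e - 1)]
    _ = #S * (2 * b) := by simp

end gS

noncomputable def wS (S : Finset ℕ) (a : ℕ) (t : ℝ) : ℝ :=
  (1 / (gS S t * t ^ (2 * a))) *
    ((2 * a * t ^ (2 * a - 1) * gS S t - deriv (gS S) t * t ^ (2 * a)) /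
      (gS S t + t ^ (2 * a))) ^ 2

lemma Wfun_eq_wS (k : ℕ) : Wfun k = wS (lbSet k) (2 ^ 2 ^ k) := rfl

section wS

variable {S : Finset ℕ} {a b n : ℕ} {t : ℝ}

lemma half_le_one_sub_inv (ha : 0 < a) : (1 / 2 : ℝ) ≤ 1 - 1 / (2 * a) := by
  have ha' : (1 : ℝ) ≤ a := by exact_mod_cast ha
  have : 1 / (2 * a) ≤ (1 / 2 : ℝ) := by gcongr; linarith
  linarith

lemma half_le_pow_of_one_sub_le (ha : 0 < a) (ht : 1 - 1 / (2 * a) ≤ t) : 1 / 2 ≤ t ^ a := by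
  have ha' : (a : ℝ) ≠ 0 := by positivity
  calc (1 / 2 : ℝ) = 1 + a * -(1 / (2 * a)) := by field_simp; ring
    _ ≤ (1 + -(1 / (2 * a))) ^ a := one_add_mul_le_pow (by linarith [half_le_one_sub_inv ha]) a
    _ ≤ t ^ a := pow_le_pow_left₀ (by linarith [half_le_one_sub_inv ha]) (by linarith) a

lemma mul_gS_div_four_le (h0 : 0 ∈ S) (hb : ∀ e ∈ S, e ≤ b) (hn : #S ≤ n)
    (hab : 8 * n * b ≤ a) (ha : 0 < a) (ht : t ∈ Set.Icc (1 - 1 / (2 * a : ℝ)) 1) :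
    a * gS S t / 4 ≤ 2 * a * t ^ (2 * a - 1) * gS S t - deriv (gS S) t * t ^ (2 * a) := by
  obtain ⟨ht₁, ht₂⟩ := ht
  have ht₀ : 0 ≤ t := by linarith [half_le_one_sub_inv ha]
  have hg : 1 ≤ gS S t := one_le_gS S h0 ht₀
  have hT : 1 / 4 ≤ t ^ (2 * a - 1) := by
    calc (1 / 4 : ℝ) ≤ (t ^ a) ^ 2 := by nlinarith [half_le_pow_of_one_sub_le ha ht₁]
      _ = t ^ (2 * a) := by ring
      _ ≤ t ^ (2 * a - 1) := pow_le_pow_of_le_one ht₀ ht₂ (by omega)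
  have hD : deriv (gS S) t * t ^ (2 * a) ≤ a / 4 := by
    have h₁ : (#S : ℝ) * (2 * b) ≤ a / 4 := by
      have : ((#S * (8 * b) : ℕ) : ℝ) ≤ a := by
        exact_mod_cast le_trans (Nat.mul_le_mul_right _ hn) (by linarith)
      push_cast at this; linarith
    calc deriv (gS S) t * t ^ (2 * a) ≤ deriv (gS S) t * 1 := by
          gcongr
          · exact deriv_gS_nonneg S ht₀
          · exact pow_le_one₀ ht₀ ht₂
      _ ≤ a / 4 := by linarith [deriv_gS_le S hb ht₀ ht₂]
  have hA : (a : ℝ) * gS S t / 2 ≤ 2 * a * t ^ (2 * a - 1) * gS S t := by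
    have := mul_le_mul_of_nonneg_left hT (by positivity : (0 : ℝ) ≤ 2 * a * gS S t)
    linarith
  have : (a : ℝ) ≤ a * gS S t := le_mul_of_one_le_right (by positivity) hg
  linarith

lemma sq_div_le_wS (h0 : 0 ∈ S) (hb : ∀ e ∈ S, e ≤ b) (hn : #S ≤ n)
    (hab : 8 * n * b ≤ a) (ha : 0 < a) (ht : t ∈ Set.Icc (1 - 1 / (2 * a : ℝ)) 1) :
    (a : ℝ) ^ 2 / (64 * n) ≤ wS S a t := by
  have hN := mul_gS_div_four_le h0 hb hn hab ha ht
  have ht₀ : 0 < t := by linarith [half_le_one_sub_inv ha, ht.1]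
  have hg : 1 ≤ gS S t := one_le_gS S h0 ht₀.le
  have hgn : gS S t ≤ n := (gS_le_card S ht₀.le ht.2).trans (by exact_mod_cast hn)
  have hT₁ : t ^ (2 * a) ≤ 1 := pow_le_one₀ ht₀.le ht.2
  have hT₀ : 0 < t ^ (2 * a) := by positivity
  have hn₀ : (0 : ℝ) < n := by linarith
  rw [wS]
  set g := gS S t
  set T := t ^ (2 * a)
  set N := 2 * a * t ^ (2 * a - 1) * g - deriv (gS S) t * T
  have hden : g * T * (g + T) ^ 2 ≤ 4 * g ^ 3 :=
    calc g * T * (g + T) ^ 2 ≤ g * (2 * g) ^ 2 := by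
          gcongr
          · exact mul_le_of_le_one_right (by positivity) hT₁
          · linarith
      _ = 4 * g ^ 3 := by ring
  rw [show 1 / (g * T) * (N / (g + T)) ^ 2 = N ^ 2 / (g * T * (g + T) ^ 2) by field_simp,
    div_le_div_iff₀ (by positivity) (by positivity)]
  calc (a : ℝ) ^ 2 * (g * T * (g + T) ^ 2) ≤ a ^ 2 * (4 * g ^ 3) := by gcongr
    _ ≤ (a * g / 4) ^ 2 * (64 * n) := by
        have : 0 ≤ (a : ℝ) ^ 2 * g ^ 2 := by positivity
        nlinarith
    _ ≤ N ^ 2 * (64 * n) := by gcongr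

lemma continuousOn_wS (h0 : 0 ∈ S) : ContinuousOn (wS S a) (Set.Ioi 0) := by
  have hg : ∀ t ∈ Set.Ioi (0 : ℝ), 0 < gS S t := fun t ht =>
    zero_lt_one.trans_le (one_le_gS S h0 (le_of_lt ht))
  unfold wS
  fun_prop (disch := intro t ht; have := hg t ht; have : (0 : ℝ) < t := ht; positivity)

lemma one_div_le_integral_sqrt_wS (h0 : 0 ∈ S) (hb : ∀ e ∈ S, e ≤ b) (hn : #S ≤ n)
    (hab : 8 * n * b ≤ a) (ha : 0 < a) :
    1 / (16 * √n) ≤ ∫ t in (1 - 1 / (2 * a : ℝ))..1, √(wS S a t) := by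
  have hle : 1 - 1 / (2 * a : ℝ) ≤ 1 := by
    have : 0 ≤ 1 / (2 * a : ℝ) := by positivity
    linarith
  have hIcc : Set.Icc (1 - 1 / (2 * a : ℝ)) 1 ⊆ Set.Ioi 0 := fun t ht =>
    Set.mem_Ioi.mpr (by linarith [half_le_one_sub_inv ha, ht.1])
  have hn₀ : (0 : ℝ) < n := by
    have : 0 < #S := card_pos.mpr ⟨0, h0⟩
    exact_mod_cast this.trans_le hn
  have hbound : ∀ t ∈ Set.Icc (1 - 1 / (2 * a : ℝ)) 1, a / (8 * √n) ≤ √(wS S a t) := by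
    intro t ht
    have hW := sq_div_le_wS h0 hb hn hab ha ht
    rw [Real.le_sqrt (by positivity) ((by positivity : (0 : ℝ) ≤ _).trans hW), div_pow, mul_pow,
      Real.sq_sqrt hn₀.le]
    convert hW using 2
    norm_num
  have hint : IntervalIntegrable (fun t => √(wS S a t)) MeasureTheory.volume
      (1 - 1 / (2 * a : ℝ)) 1 :=
    (((continuousOn_wS h0).mono hIcc).sqrt).intervalIntegrable_of_Icc hle
  calc 1 / (16 * √n) = ∫ _ in (1 - 1 / (2 * a : ℝ))..1, a / (8 * √n) := by
        rw [intervalIntegral.integral_const, smul_eq_mul]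
        field_simp
        ring
    _ ≤ _ := intervalIntegral.integral_mono_on hle intervalIntegrable_const hint hbound

end wS

lemma zero_mem_lbSet (k : ℕ) : 0 ∈ lbSet k := by simp [lbSet]

lemma card_lbSet_le {k : ℕ} (hk : 1 ≤ k) : #(lbSet k) ≤ k + 1 := by
  have : #((Icc 1 (k - 1)).image fun i => 2 ^ 2 ^ i) ≤ k - 1 :=
    card_image_le.trans (by simp)
  have := card_union_le ({0, 1} : Finset ℕ) ((Icc 1 (k - 1)).image fun i => 2 ^ 2 ^ i)
  have : #({0, 1} : Finset ℕ) = 2 := rfl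
  simp only [lbSet]
  omega

lemma le_of_mem_lbSet {k e : ℕ} (he : e ∈ lbSet k) : e ≤ 2 ^ 2 ^ (k - 1) := by
  have : 2 ≤ 2 ^ 2 ^ (k - 1) := Nat.le_self_pow (Nat.two_pow_pos _).ne' 2
  simp only [lbSet, mem_union, mem_insert, mem_singleton, mem_image, mem_Icc] at he
  rcases he with (rfl | rfl) | ⟨i, hi, rfl⟩
  · omega
  · omega
  · exact Nat.pow_le_pow_right two_pos (Nat.pow_le_pow_right two_pos hi.2)

lemma eight_mul_mul_two_pow_two_pow_le {k : ℕ} (hk : 4 ≤ k) :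
    8 * (k + 1) * 2 ^ 2 ^ (k - 1) ≤ 2 ^ 2 ^ k := by
  obtain ⟨j, rfl⟩ := Nat.exists_eq_add_of_le' hk
  have h₃ : 2 ^ (j + 3) = 8 * 2 ^ j := by ring
  have h₆ : 2 ^ (j + 6) = 8 * 2 ^ (j + 3) := by ring
  have hj : j + 6 ≤ 2 ^ (j + 3) := by
    have := Nat.lt_two_pow_self (n := j)
    omega
  have h : 8 * (j + 4 + 1) ≤ 2 ^ 2 ^ (j + 3) :=
    calc 8 * (j + 4 + 1) ≤ 2 ^ (j + 6) := by omega
      _ ≤ 2 ^ 2 ^ (j + 3) := Nat.pow_le_pow_right two_pos hj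
  calc 8 * (j + 4 + 1) * 2 ^ 2 ^ (j + 4 - 1) ≤ 2 ^ 2 ^ (j + 3) * 2 ^ 2 ^ (j + 3) := by
        rw [show j + 4 - 1 = j + 3 by omega]
        gcongr
    _ = 2 ^ 2 ^ (j + 4) := by rw [← pow_add, pow_succ 2 (j + 3)]; ring_nf

theorem stmt15 :
    ∃ c : ℝ, c > 0 ∧ ∃ K : ℕ, ∀ k : ℕ, K ≤ k →
      (∫ t in (1 - 1 / (2 * ((2 : ℝ) ^ 2 ^ k)))..1, Real.sqrt (Wfun k t)) ≥
        c / Real.sqrt k := by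
  refine ⟨1 / 32, by norm_num, 4, fun k hk => ?_⟩
  rw [Wfun_eq_wS]
  have h := one_div_le_integral_sqrt_wS (zero_mem_lbSet k) (fun _ => le_of_mem_lbSet)
    (card_lbSet_le (by omega)) (eight_mul_mul_two_pow_two_pow_le hk) (by positivity)
  push_cast at h
  have hk₁ : (1 : ℝ) ≤ k := by exact_mod_cast (by omega : 1 ≤ k)
  have hsqrt : √((k : ℝ) + 1) ≤ 2 * √k := by
    rw [show (2 : ℝ) * √k = √(4 * k) by rw [Real.sqrt_mul (by norm_num)]; norm_num]
    exact Real.sqrt_le_sqrt (by linarith)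
  calc (1 / 32 : ℝ) / √k ≤ 1 / (16 * √((k : ℝ) + 1)) := by
        rw [div_div, one_div_le_one_div (by positivity) (by positivity)]
        linarith
    _ ≤ _ := h
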